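/- Let S be a finite R-trivial monoid and let e, f ∈ S be idempotents. Then the left ideal S(ef)^ω is the least upper bound of Se and Sf in the poset of left ideals generated by idempotents, ordered by reverse inclusion. That is: S(ef)^ω ⊆ Se, S(ef)^ω ⊆ Sf, and for any idempotent g with Sg ⊆ Se and Sg ⊆ Sf, one has Sg ⊆ S(ef)^ω. -/

import Mathlib

/-!
Write `z = (ef)^n = u f` with `u = (ef)^(n-1) e`. Then `z` and `z u` generate the same right
ideal, because `z u f = z² = z`; R-triviality forces `z = z u`, so `z` lies in `Se`, and it lies
in `Sf` by its factorization. Conversely, an idempotent `g` with `Sg ⊆ Se ∩ Sf` satisfies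
`g e = g = g f`, hence `g (ef)^n = g` and `g ∈ Sz`.
-/

def IsRTrivial (M : Type*) [Monoid M] : Prop :=
  ∀ a b : M, {z : M | ∃ s : M, a * s = z} = {z : M | ∃ s : M, b * s = z} → a = b

section

variable {M : Type*} [Monoid M]

theorem IsRTrivial.eq_of_mul_eq_of_mul_eq (hR : IsRTrivial M) {a b u v : M}
    (hu : b * u = a) (hv : a * v = b) : a = b :=
  hR a b <| Set.ext fun _ =>
    ⟨fun ⟨s, hs⟩ => ⟨u * s, by rw [← mul_assoc, hu, hs]⟩,
     fun ⟨s, hs⟩ => ⟨v * s, by rw [← mul_assoc, hv, hs]⟩⟩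

theorem IsRTrivial.mul_eq_self_of_mul_eq {z u v : M} (hR : IsRTrivial M)
    (hz : IsIdempotentElem z) (h : u * v = z) : z * u = z :=
  hR.eq_of_mul_eq_of_mul_eq rfl (by rw [mul_assoc, h, hz.eq])

theorem mem_leftIdeal_self (x : M) : x ∈ {z : M | ∃ s : M, s * x = z} :=
  ⟨1, one_mul x⟩

theorem leftIdeal_subset_of_mem {x y : M} (h : y ∈ {z : M | ∃ s : M, s * x = z}) :
    {z : M | ∃ s : M, s * y = z} ⊆ {z : M | ∃ s : M, s * x = z} := by
  obtain ⟨t, rfl⟩ := h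
  rintro _ ⟨s, rfl⟩
  exact ⟨s * t, mul_assoc s t x⟩

theorem mul_eq_self_of_mem_leftIdeal {e x : M} (he : IsIdempotentElem e)
    (h : x ∈ {z : M | ∃ s : M, s * e = z}) : x * e = x := by
  obtain ⟨s, rfl⟩ := h
  rw [mul_assoc, he.eq]

theorem mul_pow_eq_self_of_mul_eq_self {a x : M} (h : a * x = a) (n : ℕ) : a * x ^ n = a := by
  induction n with
  | zero => rw [pow_zero, mul_one]
  | succ n ih => rw [pow_succ, ← mul_assoc, ih, h]

end

theorem leftIdeal_lub_general (M : Type*) [Monoid M]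
    (hR : ∀ a b : M, {z : M | ∃ s : M, a * s = z} = {z : M | ∃ s : M, b * s = z} → a = b)
    (e f : M) (he : e * e = e) (hf : f * f = f)
    (n : ℕ) (hn : 0 < n) (hef : (e * f) ^ n * (e * f) ^ n = (e * f) ^ n) :
    {z : M | ∃ s : M, s * (e * f) ^ n = z} ⊆ {z : M | ∃ s : M, s * e = z} ∧
    {z : M | ∃ s : M, s * (e * f) ^ n = z} ⊆ {z : M | ∃ s : M, s * f = z} ∧
    ∀ g : M, g * g = g →
      {z : M | ∃ s : M, s * g = z} ⊆ {z : M | ∃ s : M, s * e = z} →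
      {z : M | ∃ s : M, s * g = z} ⊆ {z : M | ∃ s : M, s * f = z} →
      {z : M | ∃ s : M, s * g = z} ⊆ {z : M | ∃ s : M, s * (e * f) ^ n = z} := by
  obtain ⟨m, rfl⟩ := Nat.exists_eq_add_one_of_ne_zero hn.ne'
  have hsplit : (e * f) ^ m * e * f = (e * f) ^ (m + 1) := by rw [pow_succ, mul_assoc]
  refine ⟨leftIdeal_subset_of_mem ⟨(e * f) ^ (m + 1) * (e * f) ^ m, ?_⟩,
    leftIdeal_subset_of_mem ⟨_, hsplit⟩, fun g _ hge hgf => leftIdeal_subset_of_mem ⟨g, ?_⟩⟩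
  · rw [mul_assoc]
    exact IsRTrivial.mul_eq_self_of_mul_eq hR hef hsplit
  · have hge' := mul_eq_self_of_mem_leftIdeal he (hge (mem_leftIdeal_self g))
    have hgf' := mul_eq_self_of_mem_leftIdeal hf (hgf (mem_leftIdeal_self g))
    exact mul_pow_eq_self_of_mul_eq_self (by rw [← mul_assoc, hge', hgf']) _

/-- For idempotents `e, f` in a finite R-trivial monoid, the left ideal `S(ef)^ω`
is the least upper bound of `Se` and `Sf` in the set of left ideals generated by
idempotents, ordered by reverse inclusion. -/
theorem leftIdeal_lub (M : Type*) [Monoid M] [Finite M]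
    (hR : ∀ a b : M, {z : M | ∃ s : M, a * s = z} = {z : M | ∃ s : M, b * s = z} → a = b)
    (e f : M) (he : e * e = e) (hf : f * f = f)
    (n : ℕ) (hn : 0 < n) (hef : (e * f) ^ n * (e * f) ^ n = (e * f) ^ n) :
    {z : M | ∃ s : M, s * (e * f) ^ n = z} ⊆ {z : M | ∃ s : M, s * e = z} ∧
    {z : M | ∃ s : M, s * (e * f) ^ n = z} ⊆ {z : M | ∃ s : M, s * f = z} ∧
    ∀ g : M, g * g = g →
      {z : M | ∃ s : M, s * g = z} ⊆ {z : M | ∃ s : M, s * e = z} →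
      {z : M | ∃ s : M, s * g = z} ⊆ {z : M | ∃ s : M, s * f = z} →
      {z : M | ∃ s : M, s * g = z} ⊆ {z : M | ∃ s : M, s * (e * f) ^ n = z} :=
  leftIdeal_lub_general M hR e f he hf n hn hef
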